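/- arXiv:1510.07154 — 2 statements merged into one kernel-verified Lean document; each statement's English description precedes it below -/
import Mathlib

section
/- Let e be a Demazure root of a full-dimensional rational polyhedral cone σ ⊆ N⊗ℚ with distinguished ray ρ. Then the derivation ∂_e of K[σ^∨ ∩ M], given by ∂_e(χ^m) = ⟨p_ρ, m⟩ χ^{m+e}, is locally nilpotent. -/
/-- The standard pairing between the lattice `N = ℤ^n` and its dual `M = ℤ^n`. -/
def dotp {n : ℕ} (p e : Fin n → ℤ) : ℤ := ∑ k, p k * e k

/-- The additive monoid `σ^∨ ∩ M` of lattice points of the dual cone of the cone `σ`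
generated by the (primitive generators of its) rays `p 0, …, p (m-1)`. -/
def dualConeM {n m : ℕ} (p : Fin m → Fin n → ℤ) : AddSubmonoid (Fin n → ℤ) where
  carrier := {v | ∀ k, 0 ≤ dotp (p k) v}
  zero_mem' := by
    intro k
    simp [dotp]
  add_mem' := by
    intro a b ha hb k
    have : dotp (p k) (a + b) = dotp (p k) a + dotp (p k) b := by
      simp [dotp, mul_add, Finset.sum_add_distrib]
    rw [this]
    exact add_nonneg (ha k) (hb k)

/-!
Write `d(v) = ⟨p_ρ, v⟩ ≥ 0` for a monomial `χ^v`. If `d(v) = 0` then `∂_e χ^v = 0`; otherwise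
`v + e` still lies in `σ^∨` (the root `e` pairs non-negatively with every ray other than `ρ`,
and `d(v + e) = d(v) - 1 ≥ 0`), so `∂_e χ^v` is a multiple of `χ^{v+e}` with `d` one smaller.
Hence `∂_e^{d(v)+1} χ^v = 0`, and since the monomials span `K[σ^∨ ∩ M]` and the vectors killed
by some power of `∂_e` form a subspace, `∂_e` is locally nilpotent.
-/

lemma Module.End.exists_pow_apply_eq_zero_of_basis {R M ι : Type*} [CommRing R]
    [AddCommGroup M] [Module R M] (b : Module.Basis ι R M) {f : Module.End R M}
    (h : ∀ i, ∃ k : ℕ, (f ^ k) (b i) = 0) (x : M) : ∃ k : ℕ, (f ^ k) x = 0 := by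
  have hspan : Submodule.span R (Set.range b) ≤ f.maxGenEigenspace 0 :=
    Submodule.span_le.2 (by rintro _ ⟨i, rfl⟩; simpa using h i)
  simpa using hspan (b.span_eq ▸ Submodule.mem_top : x ∈ Submodule.span R (Set.range b))

lemma dotp_add {n : ℕ} (p a b : Fin n → ℤ) :
    dotp p (a + b) = dotp p a + dotp p b := by
  simp [dotp, mul_add, Finset.sum_add_distrib]

section DemazureRoot

variable {n m : ℕ} {p : Fin m → Fin n → ℤ} {ρ : Fin m} {e : Fin n → ℤ}

lemma add_mem_dualConeM_of_dotp_pos (he : dotp (p ρ) e = -1)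
    (he' : ∀ k, k ≠ ρ → 0 ≤ dotp (p k) e) {v : Fin n → ℤ} (hv : v ∈ dualConeM p)
    (hpos : 0 < dotp (p ρ) v) : v + e ∈ dualConeM p := by
  intro k
  rw [dotp_add]
  by_cases hk : k = ρ
  · subst hk; omega
  · exact add_nonneg (hv k) (he' k hk)

variable {K : Type*} [Field K]
  {D : AddMonoidAlgebra K (dualConeM p) →ₗ[K] AddMonoidAlgebra K (dualConeM p)}

lemma pow_apply_single_eq_zero (he : dotp (p ρ) e = -1)
    (he' : ∀ k, k ≠ ρ → 0 ≤ dotp (p k) e)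
    (hD₀ : ∀ (v : Fin n → ℤ) (hv : v ∈ dualConeM p), dotp (p ρ) v = 0 →
      D (AddMonoidAlgebra.single ⟨v, hv⟩ 1) = 0)
    (hD : ∀ (v : Fin n → ℤ) (hv : v ∈ dualConeM p) (hve : v + e ∈ dualConeM p),
      D (AddMonoidAlgebra.single ⟨v, hv⟩ 1) =
        (dotp (p ρ) v : K) • AddMonoidAlgebra.single ⟨v + e, hve⟩ 1)
    (v : Fin n → ℤ) (hv : v ∈ dualConeM p) :
    (D ^ ((dotp (p ρ) v).toNat + 1)) (AddMonoidAlgebra.single ⟨v, hv⟩ 1) = 0 := by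
  generalize hd : (dotp (p ρ) v).toNat = d
  have hnonneg : 0 ≤ dotp (p ρ) v := hv ρ
  induction d generalizing v with
  | zero => simpa using hD₀ v hv (by omega)
  | succ d ih =>
    have hve := add_mem_dualConeM_of_dotp_pos he he' hv (by omega)
    have hd' : (dotp (p ρ) (v + e)).toNat = d := by rw [dotp_add, he]; omega
    rw [pow_succ, Module.End.mul_apply, hD v hv hve, map_smul, ih (v + e) hve hd' (hve ρ),
      smul_zero]

end DemazureRoot

theorem stmt_6_general (K : Type*) [Field K] (n m : ℕ)
    (p : Fin m → Fin n → ℤ) (ρ : Fin m) (e : Fin n → ℤ)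
    (he : dotp (p ρ) e = -1) (he' : ∀ k, k ≠ ρ → 0 ≤ dotp (p k) e)
    (D : AddMonoidAlgebra K (dualConeM p) →ₗ[K] AddMonoidAlgebra K (dualConeM p))
    (hD : ∀ (v : Fin n → ℤ) (hv : v ∈ dualConeM p),
      (dotp (p ρ) v = 0 →
        D (AddMonoidAlgebra.single (⟨v, hv⟩ : dualConeM p) (1 : K)) = 0) ∧
      ∀ hve : v + e ∈ dualConeM p,
        D (AddMonoidAlgebra.single (⟨v, hv⟩ : dualConeM p) (1 : K)) =
          (dotp (p ρ) v : K) •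
            AddMonoidAlgebra.single (⟨v + e, hve⟩ : dualConeM p) (1 : K)) :
    ∀ f : AddMonoidAlgebra K (dualConeM p), ∃ k : ℕ, (D ^ k) f = 0 := by
  refine Module.End.exists_pow_apply_eq_zero_of_basis (AddMonoidAlgebra.basis _ K) ?_
  rintro ⟨v, hv⟩
  have := pow_apply_single_eq_zero he he' (fun v hv ↦ (hD v hv).1) (fun v hv ↦ (hD v hv).2) v hv
  exact ⟨_, by simpa using this⟩

/-- Let `e` be a Demazure root of a full-dimensional rational polyhedral
cone `σ` with distinguished ray `ρ`.  Any `K`-linear map `D` of `K[σ^∨ ∩ M]` satisfying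
`D(χ^m) = ⟨p_ρ, m⟩ χ^{m+e}` on monomials is locally nilpotent. -/
theorem stmt_6 (K : Type*) [Field K] [CharZero K] (n m : ℕ)
    (p : Fin m → Fin n → ℤ) (ρ : Fin m) (e : Fin n → ℤ)
    (he : dotp (p ρ) e = -1) (he' : ∀ k, k ≠ ρ → 0 ≤ dotp (p k) e)
    (D : AddMonoidAlgebra K (dualConeM p) →ₗ[K] AddMonoidAlgebra K (dualConeM p))
    (hD : ∀ (v : Fin n → ℤ) (hv : v ∈ dualConeM p),
      (dotp (p ρ) v = 0 →
        D (AddMonoidAlgebra.single (⟨v, hv⟩ : dualConeM p) (1 : K)) = 0) ∧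
      ∀ hve : v + e ∈ dualConeM p,
        D (AddMonoidAlgebra.single (⟨v, hv⟩ : dualConeM p) (1 : K)) =
          (dotp (p ρ) v : K) •
            AddMonoidAlgebra.single (⟨v + e, hve⟩ : dualConeM p) (1 : K)) :
    ∀ f : AddMonoidAlgebra K (dualConeM p), ∃ k : ℕ, (D ^ k) f = 0 :=
  stmt_6_general K n m p ρ e he he' D hD
end

section
/- Let u be the Lie algebra of derivations of K[x_1,...,x_n] spanned by a set S of monomial derivations of the form ∂_e = (∏_{j≠i} x_j^{c_j}) ∂/∂x_i with c_j ≥ 0, and suppose u is closed under Lie bracket and contains the coordinate derivations ∂/∂x_1,...,∂/∂x_r together with a derivation ∂ = x_1^{c_1}···x_r^{c_r} ∂/∂x_i for some i > r. Then u contains ∂/∂x_i. -/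
open MvPolynomial

/-- The monomial derivation `(∏_{j ≠ i} x_j ^ c_j) ∂/∂x_i` of `K[x_1,…,x_n]`.
For `c = 0` this is the coordinate derivation `∂/∂x_i`. -/
noncomputable def monD (K : Type*) [CommRing K] {n : ℕ} (i : Fin n) (c : Fin n → ℤ) :
    Derivation K (MvPolynomial (Fin n) K) (MvPolynomial (Fin n) K) :=
  MvPolynomial.mkDerivation K
    (fun j => if j = i then
        ∏ j' ∈ Finset.univ.erase i, (X j' : MvPolynomial (Fin n) K) ^ (c j').toNat
      else 0)

/-- Product rule for derivations over a finite set. -/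
lemma derivation_map_prod {K A ι : Type*} [CommRing K] [CommRing A] [Algebra K A]
    [DecidableEq ι] (D : Derivation K A A) (s : Finset ι) (f : ι → A) :
    D (∏ x ∈ s, f x) = ∑ x ∈ s, (∏ y ∈ s.erase x, f y) * D (f x) := by
  induction s using Finset.induction with
  | empty => simp
  | @insert a s ha ih =>
    rw [Finset.prod_insert ha, D.leibniz, Finset.sum_insert ha, ih,
      Finset.erase_insert ha]
    simp only [smul_eq_mul, Finset.mul_sum]
    rw [add_comm]
    congr 1
    apply Finset.sum_congr rfl
    intro x hx
    rw [Finset.erase_insert_of_ne (by rintro rfl; exact ha hx),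
      Finset.prod_insert (fun h => ha (Finset.mem_of_mem_erase h))]
    ring

lemma monD_X {K : Type*} [CommRing K] {n : ℕ} (i : Fin n) (c : Fin n → ℤ) (l : Fin n) :
    monD K i c (X l) = if l = i then
        ∏ j' ∈ Finset.univ.erase i, (X j' : MvPolynomial (Fin n) K) ^ (c j').toNat
      else 0 := by
  simp [monD, mkDerivation_X]

lemma monD_zero_X {K : Type*} [CommRing K] {n : ℕ} (j : Fin n) (l : Fin n) :
    monD K j 0 (X l) = if l = j then 1 else 0 := by
  simp [monD_X]

/-- The key bracket computation: `[∂_j, x^c ∂_i] = c_j • x^{c - e_j} ∂_i` for `j ≠ i`. -/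
lemma bracket_monD {K : Type*} [CommRing K] {n : ℕ} (i j : Fin n) (hji : j ≠ i)
    (c : Fin n → ℤ) (hcj : 1 ≤ c j) :
    ⁅monD K j 0, monD K i c⁆ =
      (((c j).toNat : K)) • monD K i (Function.update c j (c j - 1)) := by
  classical
  apply MvPolynomial.derivation_ext
  intro l
  rw [Derivation.commutator_apply, monD_zero_X, monD_X i c l, Derivation.smul_apply,
    monD_X i _ l]
  by_cases hl : l = i
  · have hlj : ¬ l = j := by rw [hl]; exact Ne.symm hji
    rw [if_pos hl, if_pos hl, if_neg hlj]
    rw [map_zero, sub_zero]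
    rw [derivation_map_prod]
    have hjmem : j ∈ Finset.univ.erase i := Finset.mem_erase.mpr ⟨hji, Finset.mem_univ j⟩
    rw [Finset.sum_eq_single j]
    · rw [Derivation.leibniz_pow, monD_zero_X, if_pos rfl, smul_eq_mul, mul_one]
      have key : (Function.update c j (c j - 1) j).toNat = (c j).toNat - 1 := by
        rw [Function.update_self]; omega
      rw [← Finset.mul_prod_erase _ _ hjmem]
      have hprod : ∏ j' ∈ (Finset.univ.erase i).erase j,
          (X j' : MvPolynomial (Fin n) K) ^ (Function.update c j (c j - 1) j').toNat
          = ∏ j' ∈ (Finset.univ.erase i).erase j,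
          (X j' : MvPolynomial (Fin n) K) ^ (c j').toNat := by
        apply Finset.prod_congr rfl
        intro x hx
        rw [Function.update_of_ne (Finset.ne_of_mem_erase hx)]
      rw [key, hprod]
      simp only [MvPolynomial.smul_eq_C_mul, map_natCast]
      ring
    · intro b hb hbj
      rw [Derivation.leibniz_pow, monD_zero_X, if_neg hbj, smul_zero, smul_zero, mul_zero]
    · intro h; exact absurd hjmem h
  · rw [if_neg hl, if_neg hl, map_zero, smul_zero, zero_sub, neg_eq_zero]
    by_cases hlj : l = j
    · rw [if_pos hlj, Derivation.map_one_eq_zero]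
    · rw [if_neg hlj, map_zero]

/-- Let `u` be a subspace of the Lie algebra of derivations of
`K[x_1,…,x_n]` spanned by a set of monomial derivations, closed under the Lie bracket,
containing the coordinate derivations `∂/∂x_1, …, ∂/∂x_r` and a derivation
`∂ = x_1^{c_1} ⋯ x_r^{c_r} ∂/∂x_i` with `i > r`.  Then `u` contains `∂/∂x_i`. -/
theorem stmt_10 (K : Type*) [Field K] [CharZero K] (n r : ℕ) (i : Fin n)
    (hi : r ≤ (i : ℕ))
    (u : Submodule K (Derivation K (MvPolynomial (Fin n) K) (MvPolynomial (Fin n) K)))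
    (hbracket : ∀ D ∈ u, ∀ D' ∈ u, ⁅D, D'⁆ ∈ u)
    (hspan : ∃ S : Set (Derivation K (MvPolynomial (Fin n) K) (MvPolynomial (Fin n) K)),
      (∀ D ∈ S, ∃ (j : Fin n) (c : Fin n → ℤ), (∀ l, 0 ≤ c l) ∧ D = monD K j c) ∧
      u = Submodule.span K S)
    (hcoord : ∀ j : Fin n, (j : ℕ) < r → monD K j 0 ∈ u)
    (c : Fin n → ℤ) (hcpos : ∀ j, 0 ≤ c j) (hcr : ∀ j : Fin n, r ≤ (j : ℕ) → c j = 0)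
    (hmem : monD K i c ∈ u) :
    monD K i 0 ∈ u := by
  classical
  suffices H : ∀ (N : ℕ) (c : Fin n → ℤ), (∀ j, 0 ≤ c j) → (∀ j : Fin n, r ≤ (j : ℕ) → c j = 0) →
      (∑ j, (c j).toNat) = N → monD K i c ∈ u → monD K i 0 ∈ u by
    exact H _ c hcpos hcr rfl hmem
  intro N
  induction N with
  | zero =>
    intro c hcpos hcr hsum hmem
    have hc : c = 0 := by
      funext j
      have h1 := hcpos j
      have h2 : (c j).toNat = 0 := by
        have := Finset.sum_eq_zero_iff.mp hsum j (Finset.mem_univ j)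
        exact this
      simp only [Pi.zero_apply]
      omega
    rwa [hc] at hmem
  | succ N ih =>
    intro c hcpos hcr hsum hmem
    -- find j with c j > 0
    have hex : ∃ j, 0 < c j := by
      by_contra h
      push_neg at h
      have : ∑ j, (c j).toNat = 0 := by
        apply Finset.sum_eq_zero
        intro j _
        have := h j
        have := hcpos j
        omega
      omega
    obtain ⟨j, hj⟩ := hex
    have hjr : (j : ℕ) < r := by
      by_contra h
      push_neg at h
      have := hcr j h
      omega
    have hji : j ≠ i := by
      intro h
      subst h
      omega
    have hb := hbracket _ (hcoord j hjr) _ hmem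
    rw [bracket_monD i j hji c hj] at hb
    set c' := Function.update c j (c j - 1) with hc'
    have hne : (((c j).toNat : K)) ≠ 0 := by
      simp only [ne_eq, Nat.cast_eq_zero]
      omega
    have hmem' : monD K i c' ∈ u := by
      have := u.smul_mem (((c j).toNat : K))⁻¹ hb
      rwa [smul_smul, inv_mul_cancel₀ hne, one_smul] at this
    apply ih c'
    · intro l
      by_cases hl : l = j
      · subst hl; rw [hc', Function.update_self]; omega
      · rw [hc', Function.update_of_ne hl]; exact hcpos l
    · intro l hl
      have hlj : l ≠ j := by omega
      rw [hc', Function.update_of_ne hlj]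
      exact hcr l hl
    · have h1 : ∑ l, (c' l).toNat
          = ((c j).toNat - 1) + ∑ l ∈ Finset.univ.erase j, (c l).toNat := by
        rw [← Finset.add_sum_erase _ _ (Finset.mem_univ j)]
        congr 1
        · rw [hc', Function.update_self]; omega
        · exact Finset.sum_congr rfl fun l hl => by
            rw [hc', Function.update_of_ne (Finset.ne_of_mem_erase hl)]
      have h2 : (∑ l, (c l).toNat)
          = (c j).toNat + ∑ l ∈ Finset.univ.erase j, (c l).toNat :=
        (Finset.add_sum_erase _ _ (Finset.mem_univ j)).symm
      omega
    · exact hmem'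
end
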